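/- arXiv:1303.4488 — 3 statements merged into one kernel-verified Lean document; each statement's English description precedes it below -/
import Mathlib

section
/- Let p ∈ (3, ∞) and q ∈ [1, ∞). There exists a constant C depending only on p and q such that: for every continuously differentiable f : ℝ³ → ℝ with f ∈ L^q(ℝ³), |∇f| ∈ L^p(ℝ³), and finite BMO seminorm [f]_{BMO}, and for every r ∈ (0, 1), one has for every x ∈ ℝ³ the bound |f(x)| ≤ C ( r^{1−3/p} ‖∇f‖_{L^p(ℝ³)} + (1 + |ln r|) [f]_{BMO} + ‖f‖_{L^q(ℝ³)} ). -/
/-!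
Split `|f x| ≤ |f x - f_{B_r}| + |f_{B_r} - f_{B_{2ⁿr}}| + |f_{B_{2ⁿr}}|` with `2ⁿ r ≥ 1` and
`n ≤ 1 + 2 |log r|`. The first term is Morrey's estimate: averaging the fundamental theorem of
calculus along the segments from `x` and rescaling the point `x + t (y - x)` back to the ball
`B_{tr}(x)` bounds it by `r^{1-3/p} ‖∇f‖_p ∫₀¹ t^{-3/p} dt`, which is finite because `p > 3`.
The middle term telescopes over `n` doublings of the radius, each costing `2³ [f]_BMO`, and the
last is at most `|B₁|^{-1/q} ‖f‖_q` by Hölder's inequality, the ball having radius at least `1`.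
-/

open MeasureTheory Metric Set Module
open scoped ENNReal

noncomputable section

abbrev E3 := EuclideanSpace ℝ (Fin 3)

def bmoSet (g : E3 → ℝ) : Set ℝ :=
  { m : ℝ | ∃ (x : E3) (ρ : ℝ), 0 < ρ ∧
      m = ⨍ y in Metric.ball x ρ, |g y - ⨍ z in Metric.ball x ρ, g z| }

def bmoSeminorm (g : E3 → ℝ) : ℝ := sSup (bmoSet g)

section MeasureSpace

variable {α : Type*} [MeasurableSpace α] {μ : Measure α}

theorem setIntegral_norm_le_eLpNorm_mul_measureReal_rpow {F : Type*} [NormedAddCommGroup F]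
    {g : α → F} {p : ℝ} (hp : 1 ≤ p) (hg : MemLp g (ENNReal.ofReal p) μ) {s : Set α}
    (hs : μ s ≠ ∞) :
    ∫ z in s, ‖g z‖ ∂μ ≤ (eLpNorm g (ENNReal.ofReal p) μ).toReal * μ.real s ^ (1 - 1 / p) := by
  have hexp : 1 / (1 : ℝ≥0∞).toReal - 1 / (ENNReal.ofReal p).toReal = 1 - 1 / p := by
    rw [ENNReal.toReal_ofReal (by linarith)]; simp
  have hL1 : eLpNorm g 1 (μ.restrict s) ≤ eLpNorm g (ENNReal.ofReal p) μ * μ s ^ (1 - 1 / p) :=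
    calc eLpNorm g 1 (μ.restrict s)
        ≤ eLpNorm g (ENNReal.ofReal p) (μ.restrict s) * μ.restrict s univ ^ (1 - 1 / p) := by
          simpa only [hexp] using eLpNorm_le_eLpNorm_mul_rpow_measure_univ
            (ENNReal.one_le_ofReal.2 hp) hg.1.restrict
      _ ≤ eLpNorm g (ENNReal.ofReal p) μ * μ s ^ (1 - 1 / p) := by
          rw [Measure.restrict_apply_univ]
          gcongr
          exact Measure.restrict_le_self
  rw [integral_norm_eq_lintegral_enorm hg.1.restrict, ← eLpNorm_one_eq_lintegral_enorm,
    measureReal_def, ENNReal.toReal_rpow, ← ENNReal.toReal_mul]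
  have hexp_nonneg : 0 ≤ 1 - 1 / p := sub_nonneg.2 (div_le_one_of_le₀ hp (by linarith))
  exact ENNReal.toReal_mono
    (ENNReal.mul_ne_top hg.2.ne (ENNReal.rpow_ne_top_of_nonneg hexp_nonneg hs)) hL1

theorem abs_setAverage_le_measureReal_rpow_mul_eLpNorm {g : α → ℝ} {q : ℝ} (hq : 1 ≤ q)
    (hg : MemLp g (ENNReal.ofReal q) μ) {s : Set α} (hs : μ s ≠ ∞) :
    |⨍ z in s, g z ∂μ| ≤ μ.real s ^ (-(1 / q)) * (eLpNorm g (ENNReal.ofReal q) μ).toReal := by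
  have hpow : (μ.real s)⁻¹ * μ.real s ^ (1 - 1 / q) = μ.real s ^ (-(1 / q)) := by
    have hq' : 0 < 1 / q := by positivity
    rw [← Real.rpow_neg_one, ← Real.rpow_add' measureReal_nonneg (by linarith)]
    ring_nf
  calc |⨍ z in s, g z ∂μ| = (μ.real s)⁻¹ * |∫ z in s, g z ∂μ| := by
        rw [setAverage_eq, smul_eq_mul, abs_mul, abs_of_nonneg (inv_nonneg.2 measureReal_nonneg)]
    _ ≤ (μ.real s)⁻¹ * ∫ z in s, ‖g z‖ ∂μ := by
        gcongr
        exact abs_integral_le_integral_abs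
    _ ≤ (μ.real s)⁻¹ * ((eLpNorm g (ENNReal.ofReal q) μ).toReal * μ.real s ^ (1 - 1 / q)) := by
        gcongr
        exact setIntegral_norm_le_eLpNorm_mul_measureReal_rpow hq hg hs
    _ = μ.real s ^ (-(1 / q)) * (eLpNorm g (ENNReal.ofReal q) μ).toReal := by
        rw [← hpow]; ring

theorem abs_setAverage_sub_le {g : α → ℝ} {s : Set α} (hs₀ : μ s ≠ 0) (hs : μ s ≠ ∞)
    (hg : IntegrableOn g s μ) (c : ℝ) :
    |⨍ y in s, g y ∂μ - c| ≤ ⨍ y in s, |g y - c| ∂μ := by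
  have hs_pos : 0 < μ.real s := ENNReal.toReal_pos hs₀ hs
  have hdiff : ⨍ y in s, g y ∂μ - c = (μ.real s)⁻¹ * ∫ y in s, (g y - c) ∂μ := by
    rw [integral_sub hg (integrableOn_const hs), setIntegral_const, setAverage_eq, smul_eq_mul,
      smul_eq_mul, mul_sub, inv_mul_cancel_left₀ hs_pos.ne']
  rw [hdiff, abs_mul, abs_of_pos (inv_pos.2 hs_pos), setAverage_eq, smul_eq_mul]
  gcongr
  exact abs_integral_le_integral_abs

theorem abs_setAverage_sub_setAverage_le {g : α → ℝ} {s t : Set α} (hst : s ⊆ t)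
    (hs : μ s ≠ 0) (ht : μ t ≠ ∞) (hg : IntegrableOn g t μ) :
    |⨍ y in s, g y ∂μ - ⨍ y in t, g y ∂μ| ≤
      μ.real t / μ.real s * ⨍ y in t, |g y - ⨍ z in t, g z ∂μ| ∂μ := by
  set a := ⨍ z in t, g z ∂μ
  have hs_fin : μ s ≠ ∞ := measure_ne_top_of_subset hst ht
  have ht_pos : 0 < μ.real t :=
    ENNReal.toReal_pos (fun h => hs (measure_mono_null hst h)) ht
  calc |⨍ y in s, g y ∂μ - a| ≤ ⨍ y in s, |g y - a| ∂μ :=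
        abs_setAverage_sub_le hs hs_fin (hg.mono_set hst) a
    _ = (μ.real s)⁻¹ * ∫ y in s, |g y - a| ∂μ := by rw [setAverage_eq, smul_eq_mul]
    _ ≤ (μ.real s)⁻¹ * ∫ y in t, |g y - a| ∂μ := by
        gcongr ?_ * ?_
        exact setIntegral_mono_set ((hg.sub (integrableOn_const ht)).abs)
          (Filter.Eventually.of_forall fun _ => abs_nonneg _) hst.eventuallyLE
    _ = μ.real t / μ.real s * ⨍ y in t, |g y - a| ∂μ := by
        rw [setAverage_eq, smul_eq_mul]
        field_simp

end MeasureSpace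

theorem LocallyIntegrable.integrableOn_ball {X : Type*} [PseudoMetricSpace X] [ProperSpace X]
    [MeasurableSpace X] {ν : Measure X} {g : X → ℝ} (hg : LocallyIntegrable g ν) (x : X)
    (r : ℝ) : IntegrableOn g (ball x r) ν :=
  (hg.integrableOn_isCompact (isCompact_closedBall x r)).mono_set ball_subset_closedBall

section AddHaar

variable {E : Type*} [NormedAddCommGroup E] [NormedSpace ℝ E] [FiniteDimensional ℝ E]
  [MeasurableSpace E] [BorelSpace E] (μ : Measure E) [μ.IsAddHaarMeasure]

theorem addHaar_real_ball_of_pos (x : E) {r : ℝ} (hr : 0 < r) :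
    μ.real (ball x r) = r ^ finrank ℝ E * μ.real (ball 0 1) := by
  rw [measureReal_def, Measure.addHaar_ball_of_pos μ x hr, ENNReal.toReal_mul,
    ENNReal.toReal_ofReal (by positivity), measureReal_def]

omit [BorelSpace E] in
theorem measureReal_ball_pos (x : E) {r : ℝ} (hr : 0 < r) : 0 < μ.real (ball x r) :=
  ENNReal.toReal_pos (measure_ball_pos μ x hr).ne' measure_ball_lt_top.ne

theorem abs_setAverage_ball_le_of_one_le {g : E → ℝ} {q : ℝ} (hq : 1 ≤ q)
    (hg : MemLp g (ENNReal.ofReal q) μ) (x : E) {s : ℝ} (hs : 1 ≤ s) :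
    |⨍ y in ball x s, g y ∂μ| ≤
      μ.real (ball (0 : E) 1) ^ (-(1 / q)) * (eLpNorm g (ENNReal.ofReal q) μ).toReal := by
  refine (abs_setAverage_le_measureReal_rpow_mul_eLpNorm hq hg measure_ball_lt_top.ne).trans ?_
  have hκ := measureReal_ball_pos μ (0 : E) one_pos
  gcongr ?_ * _
  refine Real.rpow_le_rpow_of_nonpos hκ ?_ (neg_nonpos.2 (by positivity))
  rw [addHaar_real_ball_of_pos μ x (by linarith)]
  exact le_mul_of_one_le_left hκ.le (one_le_pow₀ hs)

theorem setIntegral_ball_comp_homothety (g : E → ℝ) (x : E) (r : ℝ) {t : ℝ} (ht : 0 < t) :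
    ∫ y in ball x r, g (x + t • (y - x)) ∂μ =
      (t ^ finrank ℝ E)⁻¹ * ∫ z in ball x (t * r), g z ∂μ := by
  have translate : ∀ (G : E → ℝ) (ρ : ℝ),
      ∫ y in ball x ρ, G y ∂μ = ∫ y in ball 0 ρ, G (x + y) ∂μ := by
    intro G ρ
    rw [← (measurePreserving_add_left μ x).setIntegral_preimage_emb
      (measurableEmbedding_addLeft x) G (ball x ρ)]
    congr 2
    ext y
    simp
  rw [translate, translate]
  simp only [add_sub_cancel_left]
  rw [Measure.setIntegral_comp_smul_of_pos μ (fun z => g (x + z)) _ ht,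
    _root_.smul_ball ht.ne', smul_zero, Real.norm_of_nonneg ht.le, smul_eq_mul]

omit [FiniteDimensional ℝ E] [MeasurableSpace E] [BorelSpace E] in
theorem abs_sub_le_norm_sub_mul_integral_norm_fderiv {f : E → ℝ} (hf : ContDiff ℝ 1 f)
    (x y : E) :
    |f y - f x| ≤ ‖y - x‖ * ∫ t in (0 : ℝ)..1, ‖fderiv ℝ f (x + t • (y - x))‖ := by
  have hcurve : ∀ t : ℝ, HasDerivAt (fun t : ℝ => x + t • (y - x)) (y - x) t := fun t => by
    simpa using ((hasDerivAt_id t).smul_const (y - x)).const_add x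
  have hDf : Continuous fun t : ℝ => fderiv ℝ f (x + t • (y - x)) :=
    (hf.continuous_fderiv one_ne_zero).comp (by fun_prop)
  have hftc : f y - f x = ∫ t in (0 : ℝ)..1, fderiv ℝ f (x + t • (y - x)) (y - x) := by
    rw [intervalIntegral.integral_eq_sub_of_hasDerivAt
      (fun t _ => ((hf.differentiable one_ne_zero _).hasFDerivAt).comp_hasDerivAt t (hcurve t))
      ((hDf.clm_apply continuous_const).intervalIntegrable 0 1)]
    simp
  rw [hftc, ← intervalIntegral.integral_const_mul]
  refine (intervalIntegral.abs_integral_le_integral_abs zero_le_one).trans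
    (intervalIntegral.integral_mono_on zero_le_one
      ((hDf.clm_apply continuous_const).abs.intervalIntegrable 0 1)
      ((continuous_const.mul hDf.norm).intervalIntegrable 0 1) fun t _ => ?_)
  rw [mul_comm]
  exact (fderiv ℝ f (x + t • (y - x))).le_opNorm (y - x)

theorem setIntegral_ball_abs_sub_le_integral_norm_fderiv {f : E → ℝ} (hf : ContDiff ℝ 1 f)
    (x : E) (r : ℝ) :
    ∫ y in ball x r, |f y - f x| ∂μ ≤
      r * ∫ t in Ioc (0 : ℝ) 1, ∫ y in ball x r, ‖fderiv ℝ f (x + t • (y - x))‖ ∂μ := by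
  set G : E × ℝ → ℝ := fun z => ‖fderiv ℝ f (x + z.2 • (z.1 - x))‖
  have hG : Continuous G := ((hf.continuous_fderiv one_ne_zero).comp
    (by fun_prop : Continuous fun z : E × ℝ => x + z.2 • (z.1 - x))).norm
  have hGint : Integrable G ((μ.restrict (ball x r)).prod (volume.restrict (Ioc 0 1))) := by
    rw [Measure.prod_restrict]
    exact (hG.continuousOn.integrableOn_compact
      ((isCompact_closedBall x r).prod isCompact_Icc)).mono_set
        (prod_mono ball_subset_closedBall Ioc_subset_Icc_self)
  have hsegment : ∀ y ∈ ball x r,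
      |f y - f x| ≤ r * ∫ t in Ioc (0 : ℝ) 1, G (y, t) := fun y hy => by
    refine (abs_sub_le_norm_sub_mul_integral_norm_fderiv hf x y).trans ?_
    rw [intervalIntegral.integral_of_le zero_le_one]
    exact mul_le_mul_of_nonneg_right (mem_ball_iff_norm.1 hy).le
      (setIntegral_nonneg measurableSet_Ioc fun _ _ => norm_nonneg _)
  calc ∫ y in ball x r, |f y - f x| ∂μ
      ≤ ∫ y in ball x r, r * (∫ t in Ioc (0 : ℝ) 1, G (y, t)) ∂μ :=
        setIntegral_mono_on
          ((((hf.continuous.sub continuous_const).abs).continuousOn.integrableOn_compact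
            (isCompact_closedBall x r)).mono_set ball_subset_closedBall)
          (hGint.integral_prod_left.const_mul r) measurableSet_ball hsegment
    _ = r * ∫ t in Ioc (0 : ℝ) 1, ∫ y in ball x r, G (y, t) ∂μ := by
        rw [integral_const_mul, integral_integral_swap hGint]

theorem setIntegral_ball_norm_comp_homothety_le {F : Type*} [NormedAddCommGroup F] {g : E → F}
    {p : ℝ} (hp : 1 ≤ p) (hg : MemLp g (ENNReal.ofReal p) μ) (x : E) {r t : ℝ} (hr : 0 < r)
    (ht : 0 < t) :
    ∫ y in ball x r, ‖g (x + t • (y - x))‖ ∂μ ≤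
      t ^ (-(finrank ℝ E / p)) * μ.real (ball x r) ^ (1 - 1 / p) *
        (eLpNorm g (ENNReal.ofReal p) μ).toReal := by
  set d := finrank ℝ E
  set V := μ.real (ball x r) with hV_def
  have hV : μ.real (ball x (t * r)) = t ^ d * V := by
    rw [addHaar_real_ball_of_pos μ x (mul_pos ht hr), hV_def, addHaar_real_ball_of_pos μ x hr,
      mul_pow, mul_assoc]
  have hpow : (t ^ d)⁻¹ * (t ^ d * V) ^ (1 - 1 / p) = t ^ (-(d / p)) * V ^ (1 - 1 / p) := by
    rw [Real.mul_rpow (by positivity) measureReal_nonneg, ← Real.rpow_natCast,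
      ← Real.rpow_neg ht.le, ← Real.rpow_mul ht.le, ← mul_assoc, ← Real.rpow_add ht]
    congr 2
    ring
  calc ∫ y in ball x r, ‖g (x + t • (y - x))‖ ∂μ
      = (t ^ d)⁻¹ * ∫ z in ball x (t * r), ‖g z‖ ∂μ :=
        setIntegral_ball_comp_homothety μ (fun z => ‖g z‖) x r ht
    _ ≤ (t ^ d)⁻¹ * ((eLpNorm g (ENNReal.ofReal p) μ).toReal * (t ^ d * V) ^ (1 - 1 / p)) := by
        rw [← hV]
        gcongr
        exact setIntegral_norm_le_eLpNorm_mul_measureReal_rpow hp hg measure_ball_lt_top.ne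
    _ = t ^ (-(d / p)) * V ^ (1 - 1 / p) * (eLpNorm g (ENNReal.ofReal p) μ).toReal := by
        rw [← hpow]; ring

theorem integral_Ioc_rpow_neg_div {d p : ℝ} (hdp : d < p) (hp : 0 < p) :
    ∫ t in Ioc (0 : ℝ) 1, t ^ (-(d / p)) = p / (p - d) := by
  have hexp : -1 < -(d / p) := by
    rw [neg_lt_neg_iff, div_lt_one hp]; exact hdp
  rw [← intervalIntegral.integral_of_le zero_le_one, integral_rpow (Or.inl hexp), Real.one_rpow,
    Real.zero_rpow (by linarith)]
  field_simp
  ring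

theorem integral_Ioc_setIntegral_ball_norm_comp_homothety_le {F : Type*} [NormedAddCommGroup F]
    {g : E → F} {p : ℝ} (hp₁ : 1 ≤ p) (hp : (finrank ℝ E : ℝ) < p)
    (hg : MemLp g (ENNReal.ofReal p) μ) (x : E) {r : ℝ} (hr : 0 < r) :
    ∫ t in Ioc (0 : ℝ) 1, ∫ y in ball x r, ‖g (x + t • (y - x))‖ ∂μ ≤
      p / (p - finrank ℝ E) * μ.real (ball x r) ^ (1 - 1 / p) *
        (eLpNorm g (ENNReal.ofReal p) μ).toReal := by
  set d : ℝ := (finrank ℝ E : ℝ)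
  set C := μ.real (ball x r) ^ (1 - 1 / p) * (eLpNorm g (ENNReal.ofReal p) μ).toReal
  have hint : IntegrableOn (fun t : ℝ => t ^ (-(d / p)) * C) (Ioc 0 1) :=
    (intervalIntegral.intervalIntegrable_rpow'
      (by rw [neg_lt_neg_iff, div_lt_one (by linarith)]; exact hp)).1.mul_const C
  calc ∫ t in Ioc (0 : ℝ) 1, ∫ y in ball x r, ‖g (x + t • (y - x))‖ ∂μ
      ≤ ∫ t in Ioc (0 : ℝ) 1, t ^ (-(d / p)) * C :=
        integral_mono_of_nonneg
          (Filter.Eventually.of_forall fun _ => integral_nonneg fun _ => norm_nonneg _) hint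
          ((ae_restrict_iff' measurableSet_Ioc).2 (Filter.Eventually.of_forall fun t ht => by
            simpa only [mul_assoc] using
              setIntegral_ball_norm_comp_homothety_le μ hp₁ hg x hr ht.1))
    _ = p / (p - d) * C := by
        rw [integral_mul_const, integral_Ioc_rpow_neg_div hp (by linarith)]
    _ = p / (p - d) * μ.real (ball x r) ^ (1 - 1 / p) *
          (eLpNorm g (ENNReal.ofReal p) μ).toReal := by ring

theorem abs_sub_setAverage_ball_le_of_memLp_fderiv [Nontrivial E] {f : E → ℝ}
    (hf : ContDiff ℝ 1 f) {p : ℝ} (hp : (finrank ℝ E : ℝ) < p)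
    (hDf : MemLp (fun y => ‖fderiv ℝ f y‖) (ENNReal.ofReal p) μ) (x : E) {r : ℝ} (hr : 0 < r) :
    |f x - ⨍ y in ball x r, f y ∂μ| ≤
      p / (p - finrank ℝ E) * μ.real (ball (0 : E) 1) ^ (-(1 / p)) * r ^ (1 - finrank ℝ E / p) *
        (eLpNorm (fun y => ‖fderiv ℝ f y‖) (ENNReal.ofReal p) μ).toReal := by
  set N := (eLpNorm (fun y => ‖fderiv ℝ f y‖) (ENNReal.ofReal p) μ).toReal
  set d : ℝ := (finrank ℝ E : ℝ)
  set V := μ.real (ball x r) with hV_def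
  set κ := μ.real (ball (0 : E) 1)
  have hp₁ : 1 ≤ p := le_trans (Nat.one_le_cast.2 finrank_pos) hp.le
  have hκ : 0 < κ := measureReal_ball_pos μ 0 one_pos
  have hV_pos : 0 < V := measureReal_ball_pos μ x hr
  have hV_pow : V⁻¹ * V ^ (1 - 1 / p) = r ^ (-(d / p)) * κ ^ (-(1 / p)) := by
    rw [← Real.rpow_neg_one, ← Real.rpow_add hV_pos, hV_def, addHaar_real_ball_of_pos μ x hr,
      Real.mul_rpow (by positivity) hκ.le, ← Real.rpow_natCast, ← Real.rpow_mul hr.le]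
    congr 2 <;> ring
  have hr_pow : r * r ^ (-(d / p)) = r ^ (1 - d / p) := by
    rw [sub_eq_add_neg, Real.rpow_add hr, Real.rpow_one]
  calc |f x - ⨍ y in ball x r, f y ∂μ| = |⨍ y in ball x r, f y ∂μ - f x| := abs_sub_comm _ _
    _ ≤ ⨍ y in ball x r, |f y - f x| ∂μ :=
        abs_setAverage_sub_le (measure_ball_pos μ x hr).ne' measure_ball_lt_top.ne
          (LocallyIntegrable.integrableOn_ball hf.continuous.locallyIntegrable x r) (f x)
    _ = V⁻¹ * ∫ y in ball x r, |f y - f x| ∂μ := by rw [setAverage_eq, smul_eq_mul]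
    _ ≤ V⁻¹ * (r * (p / (p - d) * V ^ (1 - 1 / p) * N)) := by
        gcongr
        refine (setIntegral_ball_abs_sub_le_integral_norm_fderiv μ hf x r).trans ?_
        gcongr
        simpa only [norm_norm] using
          integral_Ioc_setIntegral_ball_norm_comp_homothety_le μ hp₁ hp hDf x hr
    _ = p / (p - d) * (V⁻¹ * V ^ (1 - 1 / p)) * r * N := by ring
    _ = p / (p - d) * κ ^ (-(1 / p)) * r ^ (1 - d / p) * N := by
        rw [hV_pow, ← hr_pow]; ring

end AddHaar

theorem exists_one_le_two_pow_mul {r : ℝ} (hr : 0 < r) :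
    ∃ n : ℕ, 1 ≤ 2 ^ n * r ∧ (n : ℝ) ≤ 1 + 2 * |Real.log r| := by
  set n := ⌈|Real.logb 2 r|⌉₊
  have hlog2 : 1 / 2 < Real.log 2 := by linarith [Real.log_two_gt_d9]
  refine ⟨n, ?_, ?_⟩
  · have hinv : r⁻¹ ≤ 2 ^ n := calc
      r⁻¹ = (2 : ℝ) ^ (-Real.logb 2 r) := by
        rw [Real.rpow_neg zero_le_two, Real.rpow_logb two_pos (by norm_num) hr]
      _ ≤ (2 : ℝ) ^ (n : ℝ) :=
        Real.rpow_le_rpow_of_exponent_le one_le_two ((neg_le_abs _).trans (Nat.le_ceil _))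
      _ = 2 ^ n := Real.rpow_natCast 2 n
    exact (inv_le_iff_one_le_mul₀ hr).1 hinv
  · have hlogb : |Real.logb 2 r| ≤ 2 * |Real.log r| := by
      have hlog2_pos : 0 < Real.log 2 := by linarith
      rw [Real.logb, abs_div, abs_of_pos hlog2_pos, div_le_iff₀ hlog2_pos]
      nlinarith [abs_nonneg (Real.log r)]
    linarith [Nat.ceil_lt_add_one (abs_nonneg (Real.logb 2 r))]

section BMO

variable {g : E3 → ℝ}

theorem setAverage_ball_abs_sub_le_bmoSeminorm (hb : BddAbove (bmoSet g)) (x : E3) {ρ : ℝ}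
    (hρ : 0 < ρ) : ⨍ y in ball x ρ, |g y - ⨍ z in ball x ρ, g z| ≤ bmoSeminorm g :=
  le_csSup hb ⟨x, ρ, hρ, rfl⟩

theorem bmoSeminorm_nonneg (hb : BddAbove (bmoSet g)) : 0 ≤ bmoSeminorm g :=
  (integral_nonneg fun _ => abs_nonneg _).trans
    (setAverage_ball_abs_sub_le_bmoSeminorm hb 0 one_pos)

theorem abs_setAverage_ball_sub_two_mul_le (hg : LocallyIntegrable g) (hb : BddAbove (bmoSet g))
    (x : E3) {ρ : ℝ} (hρ : 0 < ρ) :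
    |(⨍ y in ball x ρ, g y) - ⨍ y in ball x (2 * ρ), g y| ≤ 8 * bmoSeminorm g := by
  have hratio : volume.real (ball x (2 * ρ)) / volume.real (ball x ρ) = 8 := by
    rw [addHaar_real_ball_of_pos volume x (by positivity), addHaar_real_ball_of_pos volume x hρ,
      finrank_euclideanSpace_fin]
    field_simp [(measureReal_ball_pos volume (0 : E3) one_pos).ne']
    ring
  calc |(⨍ y in ball x ρ, g y) - ⨍ y in ball x (2 * ρ), g y|
      ≤ volume.real (ball x (2 * ρ)) / volume.real (ball x ρ) *
          ⨍ y in ball x (2 * ρ), |g y - ⨍ z in ball x (2 * ρ), g z| :=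
        abs_setAverage_sub_setAverage_le (ball_subset_ball (by linarith : ρ ≤ 2 * ρ))
          (measure_ball_pos volume x hρ).ne' measure_ball_lt_top.ne
          (LocallyIntegrable.integrableOn_ball hg x _)
    _ ≤ 8 * bmoSeminorm g := by
        rw [hratio]
        gcongr
        exact setAverage_ball_abs_sub_le_bmoSeminorm hb x (by positivity)

theorem abs_setAverage_ball_sub_two_pow_mul_le (hg : LocallyIntegrable g)
    (hb : BddAbove (bmoSet g)) (x : E3) {ρ : ℝ} (hρ : 0 < ρ) (n : ℕ) :
    |(⨍ y in ball x ρ, g y) - ⨍ y in ball x (2 ^ n * ρ), g y| ≤ 8 * n * bmoSeminorm g := by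
  induction n with
  | zero => simp
  | succ n ih =>
    have hstep := abs_setAverage_ball_sub_two_mul_le hg hb x (by positivity : 0 < 2 ^ n * ρ)
    rw [pow_succ, mul_comm _ (2 : ℝ), mul_assoc]
    push_cast
    linarith [abs_sub_le (⨍ y in ball x ρ, g y) (⨍ y in ball x (2 ^ n * ρ), g y)
      (⨍ y in ball x (2 * (2 ^ n * ρ)), g y)]

end BMO

/-- for p ∈ (3,∞) and q ∈ [1,∞) there is a constant C depending only on
p and q such that for every C¹ function f ∈ L^q(ℝ³) with |∇f| ∈ L^p(ℝ³) and finite BMO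
seminorm, and every r ∈ (0,1),
|f(x)| ≤ C(r^{1−3/p}‖∇f‖_{L^p} + (1 + |ln r|)[f]_BMO + ‖f‖_{L^q}) for every x. -/
theorem pointwise_bound_bmo_grad (p q : ℝ) (hp : 3 < p) (hq : 1 ≤ q) :
    ∃ C : ℝ, ∀ f : E3 → ℝ,
      ContDiff ℝ 1 f →
      MemLp f (ENNReal.ofReal q) volume →
      MemLp (fun x => ‖fderiv ℝ f x‖) (ENNReal.ofReal p) volume →
      BddAbove (bmoSet f) →
      ∀ r : ℝ, 0 < r → r < 1 → ∀ x : E3,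
        |f x| ≤ C * (r ^ (1 - 3 / p)
            * (eLpNorm (fun y => ‖fderiv ℝ f y‖) (ENNReal.ofReal p) volume).toReal
          + (1 + |Real.log r|) * bmoSeminorm f
          + (eLpNorm f (ENNReal.ofReal q) volume).toReal) := by
  set κ := volume.real (ball (0 : E3) 1)
  have hκ : 0 < κ := measureReal_ball_pos volume 0 one_pos
  set Cp := p / (p - 3) * κ ^ (-(1 / p))
  set Cq := κ ^ (-(1 / q))
  have hCp : 0 ≤ Cp := mul_nonneg (div_pos (by linarith) (by linarith)).le (by positivity)
  have hCq : 0 ≤ Cq := by positivity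
  refine ⟨Cp + 16 + Cq, fun f hf hfq hDf hb r hr _ x => ?_⟩
  set G := r ^ (1 - 3 / p) *
    (eLpNorm (fun y => ‖fderiv ℝ f y‖) (ENNReal.ofReal p) volume).toReal
  set LS := (1 + |Real.log r|) * bmoSeminorm f
  set Nq := (eLpNorm f (ENNReal.ofReal q) volume).toReal
  obtain ⟨n, hn_one_le, hn⟩ := exists_one_le_two_pow_mul hr
  have hmorrey : |f x - ⨍ y in ball x r, f y| ≤ Cp * G := by
    have h := abs_sub_setAverage_ball_le_of_memLp_fderiv volume hf (by simpa using hp) hDf x hr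
    simp only [finrank_euclideanSpace_fin, Nat.cast_ofNat] at h
    linarith
  have hS := bmoSeminorm_nonneg hb
  have hbmo : |(⨍ y in ball x r, f y) - ⨍ y in ball x (2 ^ n * r), f y| ≤ 16 * LS :=
    (abs_setAverage_ball_sub_two_pow_mul_le hf.continuous.locallyIntegrable hb x hr n).trans
      (by nlinarith [abs_nonneg (Real.log r)])
  have htail : |⨍ y in ball x (2 ^ n * r), f y| ≤ Cq * Nq :=
    abs_setAverage_ball_le_of_one_le volume hq hfq x hn_one_le
  have htri := (abs_sub_abs_le_abs_sub (f x) (⨍ y in ball x (2 ^ n * r), f y)).trans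
    (abs_sub_le (f x) (⨍ y in ball x r, f y) (⨍ y in ball x (2 ^ n * r), f y))
  have hG : 0 ≤ G := by positivity
  have hLS : 0 ≤ LS := mul_nonneg (by positivity) hS
  have hNq : 0 ≤ Nq := ENNReal.toReal_nonneg
  nlinarith [mul_nonneg hCp (add_nonneg hLS hNq), mul_nonneg hCq (add_nonneg hG hLS)]

end
end

section
/- There exists an absolute constant C > 0 such that for every three times continuously differentiable compactly supported g : ℝ³ → ℝ³, ∫_{ℝ³} |∇²g|⁴ dx ≤ C ∫_{ℝ³} |∇g|² |∇³g|² dx. -/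
/-!
Writing `v = ∇g` as a family of nine scalar functions, the inequality becomes
`∫ |∇v|⁴ ≤ 14 ∫ |v|² |∇²v|²`, which holds for every C² compactly supported family `v`.
With `Aₖ = ½ ∂ₖ|v|² = ∑ₐ vₐ ∂ₖvₐ`, the vector field `A |∇v|²` has divergence
`|∇v|⁴ + (∑ₐ vₐ Δvₐ) |∇v|² + A · ∇|∇v|²` and integrates to zero. Cauchy–Schwarz bounds the last
two terms by `√3` and `2` times `|v| |∇²v| |∇v|²`, so by AM–GM their sum is at least
`-(½ |∇v|⁴ + 7 |v|² |∇²v|²)`, and integrating gives `½ ∫ |∇v|⁴ ≤ 7 ∫ |v|² |∇²v|²`.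
-/

open MeasureTheory

noncomputable section

/-- The j-th partial derivative of a scalar function on ℝ³. -/
def pder (j : Fin 3) (f : E3 → ℝ) : E3 → ℝ :=
  fun x => fderiv ℝ f x (EuclideanSpace.single j 1)

/-- |∇v|², the squared Euclidean norm of the gradient of v : ℝ³ → ℝ³. -/
def grad2 (v : E3 → E3) (x : E3) : ℝ :=
  ∑ i : Fin 3, ∑ j : Fin 3, (pder j (fun y => v y i) x) ^ 2

/-- |∇²v|², the squared norm of the second derivatives of v : ℝ³ → ℝ³. -/
def hess2 (v : E3 → E3) (x : E3) : ℝ :=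
  ∑ i : Fin 3, ∑ j : Fin 3, ∑ k : Fin 3, (pder k (pder j (fun y => v y i)) x) ^ 2

/-- |∇³v|², the squared norm of the third derivatives of v : ℝ³ → ℝ³. -/
def third2 (v : E3 → E3) (x : E3) : ℝ :=
  ∑ i : Fin 3, ∑ j : Fin 3, ∑ k : Fin 3, ∑ l : Fin 3,
    (pder l (pder k (pder j (fun y => v y i))) x) ^ 2

theorem HasCompactSupport.fun_finset_sum {X M ι : Type*} [TopologicalSpace X]
    [AddCommMonoid M] {s : Finset ι} {f : ι → X → M} (hf : ∀ i ∈ s, HasCompactSupport (f i)) :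
    HasCompactSupport (fun x => ∑ i ∈ s, f i x) := by
  simpa only [Finset.sum_fn] using HasCompactSupport.finset_sum hf

theorem integral_fderiv_apply_eq_zero {E : Type*} [NormedAddCommGroup E] [NormedSpace ℝ E]
    [FiniteDimensional ℝ E] [MeasurableSpace E] [BorelSpace E] {μ : Measure E}
    [μ.IsAddHaarMeasure] {f : E → ℝ} (hf : ContDiff ℝ 1 f) (hs : HasCompactSupport f) (v : E) :
    ∫ x, fderiv ℝ f x v ∂μ = 0 := by
  have hf' : Continuous fun x => fderiv ℝ f x v :=
    (hf.continuous_fderiv one_ne_zero).clm_apply continuous_const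
  have h := integral_mul_fderiv_eq_neg_fderiv_mul_of_integrable (μ := μ) (f := fun _ => (1 : ℝ))
    (g := f) (v := v) (by simp)
    (by simpa using hf'.integrable_of_hasCompactSupport (hs.fderiv_apply (𝕜 := ℝ) v))
    (by simpa using hf.continuous.integrable_of_hasCompactSupport hs)
    (fun x _ => differentiableAt_const _) (fun x _ => hf.differentiable one_ne_zero x)
  simpa using h

theorem sum_sq_sum_mul_le {α κ : Type*} [Fintype α] [Fintype κ] (f : α → ℝ) (p : α → κ → ℝ) :
    ∑ k, (∑ a, f a * p a k) ^ 2 ≤ (∑ a, f a ^ 2) * ∑ a, ∑ k, p a k ^ 2 := by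
  rw [Finset.sum_comm (f := fun a k => p a k ^ 2), Finset.mul_sum]
  exact Finset.sum_le_sum fun k _ => Finset.sum_mul_sq_le_sq_mul_sq _ _ _

theorem abs_le_add_sq_div_four_of_sq_le_mul_sq {t a h : ℝ} (ht : t ^ 2 ≤ a * h ^ 2)
    (ha : 0 ≤ a) : |t| ≤ a + h ^ 2 / 4 :=
  abs_le_of_sq_le_sq (by nlinarith [sq_nonneg (a - h ^ 2 / 4)]) (by positivity)

section PartialDerivatives

variable {f h : E3 → ℝ} {x : E3}

theorem ContDiff.pder {n : ℕ} (hf : ContDiff ℝ (n + 1 : ℕ) f) (j : Fin 3) :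
    ContDiff ℝ n (pder j f) :=
  (hf.fderiv_right (by norm_cast)).clm_apply contDiff_const

theorem HasCompactSupport.pder (hf : HasCompactSupport f) (j : Fin 3) :
    HasCompactSupport (pder j f) :=
  hf.fderiv_apply (𝕜 := ℝ) _

theorem integral_pder_eq_zero (hf : ContDiff ℝ 1 f) (hs : HasCompactSupport f) (j : Fin 3) :
    ∫ x, pder j f x = 0 :=
  integral_fderiv_apply_eq_zero hf hs _

theorem pder_fun_sum {ι : Type*} {s : Finset ι} {f : ι → E3 → ℝ}
    (hf : ∀ i ∈ s, DifferentiableAt ℝ (f i) x) (k : Fin 3) :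
    pder k (fun y => ∑ i ∈ s, f i y) x = ∑ i ∈ s, pder k (f i) x := by
  simp [pder, fderiv_fun_sum hf]

theorem pder_fun_mul (hf : DifferentiableAt ℝ f x) (hh : DifferentiableAt ℝ h x) (k : Fin 3) :
    pder k (fun y => f y * h y) x = pder k f x * h x + f x * pder k h x := by
  simp [pder, fderiv_fun_mul hf hh]
  ring

theorem pder_fun_sq (hf : DifferentiableAt ℝ f x) (k : Fin 3) :
    pder k (fun y => f y ^ 2) x = 2 * f x * pder k f x := by
  simp [pder, fderiv_fun_pow 2 hf]

end PartialDerivatives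

section Families

variable {ι : Type*} [Fintype ι] (v : ι → E3 → ℝ)

def valSq (x : E3) : ℝ := ∑ a, v a x ^ 2

def gradSq (x : E3) : ℝ := ∑ a, ∑ k, pder k (v a) x ^ 2

def hessSq (x : E3) : ℝ := ∑ a, ∑ k, ∑ l, pder l (pder k (v a)) x ^ 2

def flux (k : Fin 3) (x : E3) : ℝ := (∑ a, v a x * pder k (v a) x) * gradSq v x

theorem valSq_nonneg (x : E3) : 0 ≤ valSq v x := by unfold valSq; positivity

theorem gradSq_nonneg (x : E3) : 0 ≤ gradSq v x := by unfold gradSq; positivity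

theorem hessSq_nonneg (x : E3) : 0 ≤ hessSq v x := by unfold hessSq; positivity

theorem sq_sum_mul_laplacian_le (x : E3) :
    (∑ a, v a x * ∑ k, pder k (pder k (v a)) x) ^ 2 ≤ 3 * (valSq v x * hessSq v x) := by
  refine (Finset.sum_mul_sq_le_sq_mul_sq _ _ _).trans ?_
  rw [mul_left_comm]
  refine mul_le_mul_of_nonneg_left ?_ (valSq_nonneg v x)
  rw [hessSq, Finset.mul_sum]
  refine Finset.sum_le_sum fun a _ => (sq_sum_le_card_mul_sum_sq ..).trans ?_
  simp only [Finset.card_univ, Fintype.card_fin, Nat.cast_ofNat]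
  gcongr with k
  exact Finset.single_le_sum (f := fun l => pder l (pder k (v a)) x ^ 2)
    (fun _ _ => sq_nonneg _) (Finset.mem_univ k)

variable {v}

theorem pder_gradSq (hv : ∀ a, ContDiff ℝ 2 (v a)) (k : Fin 3) (x : E3) :
    pder k (gradSq v) x = 2 * ∑ a, ∑ l, pder l (v a) x * pder k (pder l (v a)) x := by
  have hd : ∀ a l, DifferentiableAt ℝ (pder l (v a)) x := fun a l =>
    ((hv a).pder (n := 1) l).differentiable one_ne_zero x
  unfold gradSq
  rw [pder_fun_sum fun a _ => .fun_sum fun l _ => (hd a l).fun_pow 2, Finset.mul_sum]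
  refine Finset.sum_congr rfl fun a _ => ?_
  rw [pder_fun_sum fun l _ => (hd a l).fun_pow 2, Finset.mul_sum]
  refine Finset.sum_congr rfl fun l _ => ?_
  rw [pder_fun_sq (hd a l)]
  ring

theorem sum_sq_pder_gradSq_le (hv : ∀ a, ContDiff ℝ 2 (v a)) (x : E3) :
    ∑ k, pder k (gradSq v) x ^ 2 ≤ 4 * (gradSq v x * hessSq v x) := by
  have h := sum_sq_sum_mul_le (fun al : ι × Fin 3 => pder al.2 (v al.1) x)
    (fun al k => pder k (pder al.2 (v al.1)) x)
  simp only [Fintype.sum_prod_type] at h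
  simp only [pder_gradSq hv, mul_pow, ← Finset.mul_sum, show (2 : ℝ) ^ 2 = 4 by norm_num]
  exact mul_le_mul_of_nonneg_left h (by norm_num)

theorem sum_pder_flux (hv : ∀ a, ContDiff ℝ 2 (v a)) (x : E3) :
    ∑ k, pder k (flux v k) x =
      (gradSq v x + ∑ a, v a x * ∑ k, pder k (pder k (v a)) x) * gradSq v x +
        ∑ k, (∑ a, v a x * pder k (v a) x) * pder k (gradSq v) x := by
  have hv₀ : ∀ a, DifferentiableAt ℝ (v a) x := fun a =>
    (hv a).differentiable two_ne_zero x
  have hv₁ : ∀ a l, DifferentiableAt ℝ (pder l (v a)) x := fun a l =>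
    ((hv a).pder (n := 1) l).differentiable one_ne_zero x
  have hH : DifferentiableAt ℝ (gradSq v) x :=
    .fun_sum fun a _ => .fun_sum fun l _ => (hv₁ a l).fun_pow 2
  have hterm : ∀ k, pder k (flux v k) x =
      (∑ a, (pder k (v a) x ^ 2 + v a x * pder k (pder k (v a)) x)) * gradSq v x +
        (∑ a, v a x * pder k (v a) x) * pder k (gradSq v) x := fun k => by
    unfold flux
    rw [pder_fun_mul (.fun_sum fun a _ => (hv₀ a).fun_mul (hv₁ a k)) hH,
      pder_fun_sum fun a _ => (hv₀ a).fun_mul (hv₁ a k)]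
    simp only [pder_fun_mul (hv₀ _) (hv₁ _ k), sq]
  have hdiv : ∑ k, ∑ a, (pder k (v a) x ^ 2 + v a x * pder k (pder k (v a)) x) =
      gradSq v x + ∑ a, v a x * ∑ k, pder k (pder k (v a)) x := by
    rw [Finset.sum_comm]
    simp only [Finset.sum_add_distrib, Finset.mul_sum]
    rfl
  rw [Finset.sum_congr rfl fun k _ => hterm k, Finset.sum_add_distrib, ← Finset.sum_mul, hdiv]

theorem half_gradSq_sq_sub_le_sum_pder_flux (hv : ∀ a, ContDiff ℝ 2 (v a)) (x : E3) :
    gradSq v x ^ 2 / 2 - 7 * (valSq v x * hessSq v x) ≤ ∑ k, pder k (flux v k) x := by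
  have hGT := mul_nonneg (valSq_nonneg v x) (hessSq_nonneg v x)
  have hA : ∑ k, (∑ a, v a x * pder k (v a) x) ^ 2 ≤ valSq v x * gradSq v x :=
    sum_sq_sum_mul_le _ _
  have hAD : (∑ k, (∑ a, v a x * pder k (v a) x) * pder k (gradSq v) x) ^ 2 ≤
      4 * (valSq v x * hessSq v x) * gradSq v x ^ 2 :=
    calc _ ≤ (valSq v x * gradSq v x) * (4 * (gradSq v x * hessSq v x)) :=
          (Finset.sum_mul_sq_le_sq_mul_sq _ _ _).trans <| mul_le_mul hA
            (sum_sq_pder_gradSq_le hv x) (by positivity)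
            (mul_nonneg (valSq_nonneg v x) (gradSq_nonneg v x))
      _ = _ := by ring
  have hlap : ((∑ a, v a x * ∑ k, pder k (pder k (v a)) x) * gradSq v x) ^ 2 ≤
      3 * (valSq v x * hessSq v x) * gradSq v x ^ 2 := by
    rw [mul_pow]
    exact mul_le_mul_of_nonneg_right (sq_sum_mul_laplacian_le v x) (sq_nonneg _)
  rw [sum_pder_flux hv x]
  linarith [neg_abs_le ((∑ a, v a x * ∑ k, pder k (pder k (v a)) x) * gradSq v x),
    neg_abs_le (∑ k, (∑ a, v a x * pder k (v a) x) * pder k (gradSq v) x),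
    abs_le_add_sq_div_four_of_sq_le_mul_sq hlap (by positivity),
    abs_le_add_sq_div_four_of_sq_le_mul_sq hAD (by positivity)]

theorem ContDiff.gradSq (hv : ∀ a, ContDiff ℝ 2 (v a)) : ContDiff ℝ 1 (gradSq v) :=
  .sum fun a _ => .sum fun k _ => ((hv a).pder (n := 1) k).pow 2

theorem Continuous.hessSq (hv : ∀ a, ContDiff ℝ 2 (v a)) : Continuous (hessSq v) :=
  continuous_finsetSum _ fun a _ => continuous_finsetSum _ fun k _ =>
    continuous_finsetSum _ fun l _ =>
      ((((hv a).pder (n := 1) k).pder (n := 0) l).continuous).pow 2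

theorem ContDiff.flux (hv : ∀ a, ContDiff ℝ 2 (v a)) (k : Fin 3) : ContDiff ℝ 1 (flux v k) :=
  (ContDiff.sum fun a _ => ((hv a).of_le one_le_two).mul ((hv a).pder (n := 1) k)).mul
    (.gradSq hv)

theorem HasCompactSupport.valSq (hs : ∀ a, HasCompactSupport (v a)) :
    HasCompactSupport (valSq v) :=
  .fun_finset_sum fun a _ => (hs a).comp_left (g := fun t : ℝ => t ^ 2) (by simp)

theorem HasCompactSupport.gradSq (hs : ∀ a, HasCompactSupport (v a)) :
    HasCompactSupport (gradSq v) :=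
  .fun_finset_sum fun a _ => .fun_finset_sum fun k _ =>
    ((hs a).pder k).comp_left (g := fun t : ℝ => t ^ 2) (by simp)

theorem HasCompactSupport.flux (hs : ∀ a, HasCompactSupport (v a)) (k : Fin 3) :
    HasCompactSupport (flux v k) :=
  (HasCompactSupport.gradSq hs).mul_left

theorem integrable_pder_flux (hv : ∀ a, ContDiff ℝ 2 (v a)) (hs : ∀ a, HasCompactSupport (v a))
    (k : Fin 3) : Integrable (pder k (flux v k)) :=
  ((ContDiff.flux hv k).pder (n := 0) k).continuous.integrable_of_hasCompactSupport
    ((HasCompactSupport.flux hs k).pder k)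

theorem integral_sum_pder_flux_eq_zero (hv : ∀ a, ContDiff ℝ 2 (v a))
    (hs : ∀ a, HasCompactSupport (v a)) : ∫ x, ∑ k, pder k (flux v k) x = 0 := by
  rw [integral_finsetSum _ fun k _ => integrable_pder_flux hv hs k]
  exact Finset.sum_eq_zero fun k _ =>
    integral_pder_eq_zero (ContDiff.flux hv k) (HasCompactSupport.flux hs k) k

theorem integral_gradSq_sq_le (hv : ∀ a, ContDiff ℝ 2 (v a))
    (hs : ∀ a, HasCompactSupport (v a)) :
    ∫ x, gradSq v x ^ 2 ≤ 14 * ∫ x, valSq v x * hessSq v x := by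
  have hH : Integrable fun x => gradSq v x ^ 2 := by
    have hc : HasCompactSupport fun x => gradSq v x ^ 2 :=
      (HasCompactSupport.gradSq hs).comp_left (g := fun t : ℝ => t ^ 2) (by simp)
    exact ((ContDiff.gradSq hv).continuous.pow 2).integrable_of_hasCompactSupport hc
  have hGT : Integrable fun x => valSq v x * hessSq v x :=
    ((continuous_finsetSum _ fun a _ => ((hv a).continuous.pow 2)).mul
      (Continuous.hessSq hv)).integrable_of_hasCompactSupport (HasCompactSupport.valSq hs).mul_right
  have h := integral_mono (f := fun x => gradSq v x ^ 2 / 2 - 7 * (valSq v x * hessSq v x))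
    ((hH.div_const 2).sub (hGT.const_mul 7))
    (integrable_finsetSum _ fun k _ => integrable_pder_flux hv hs k)
    (half_gradSq_sq_sub_le_sum_pder_flux hv)
  rw [integral_sum_pder_flux_eq_zero hv hs, integral_sub (hH.div_const 2) (hGT.const_mul 7),
    integral_div, integral_const_mul] at h
  linarith

end Families

def jacEntry (g : E3 → E3) (a : Fin 3 × Fin 3) : E3 → ℝ := pder a.2 (fun y => g y a.1)

theorem grad2_eq_valSq (g : E3 → E3) : grad2 g = valSq (jacEntry g) := by
  ext x; simp only [grad2, valSq, jacEntry, Fintype.sum_prod_type]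

theorem hess2_eq_gradSq (g : E3 → E3) : hess2 g = gradSq (jacEntry g) := by
  ext x; simp only [hess2, gradSq, jacEntry, Fintype.sum_prod_type]

theorem third2_eq_hessSq (g : E3 → E3) : third2 g = hessSq (jacEntry g) := by
  ext x; simp only [third2, hessSq, jacEntry, Fintype.sum_prod_type]

/-- there is an absolute constant C > 0 such that for every C³ compactly
supported g : ℝ³ → ℝ³, ∫ |∇²g|⁴ ≤ C ∫ |∇g|² |∇³g|². -/
theorem hess_fourth_power_bound :
    ∃ C : ℝ, 0 < C ∧ ∀ g : E3 → E3, ContDiff ℝ 3 g → HasCompactSupport g →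
      ∫ x, (hess2 g x) ^ 2 ≤ C * ∫ x, grad2 g x * third2 g x := by
  refine ⟨14, by norm_num, fun g hg hs => ?_⟩
  rw [grad2_eq_valSq, hess2_eq_gradSq, third2_eq_hessSq]
  refine integral_gradSq_sq_le (fun a => ?_) (fun a => ?_)
  · exact ((EuclideanSpace.proj a.1).contDiff.comp hg).pder (n := 2) a.2
  · exact (hs.comp_left (g := fun z : E3 => z a.1) rfl).pder a.2
end
end

section
/- For every η > 0 there exists a constant C depending only on η such that for every three times continuously differentiable compactly supported g : ℝ³ → ℝ³ and every continuously differentiable compactly supported h : ℝ³ → ℝ³, ∫_{ℝ³} |∇²g|² |h| dx ≤ η ∫_{ℝ³} ( |∇³g|² + |∇h|² ) dx + C ∫_{ℝ³} |∇g|² ( |h|² + |∇²g|² ) dx. -/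
open MeasureTheory

noncomputable section

/-!
Write `|∇²g|² |h| = ∑_{i,j,k} (∂ₖw)² |h|` with `w = ∂ⱼgⁱ`. The function `|h|` is only Lipschitz,
but that suffices to integrate by parts in the direction `eₖ` (Rademacher):
`∫ (∂ₖw)² |h| = -∫ w ∂ₖ²w |h| - ∫ w ∂ₖw ∂ₖ|h|`, where `|∂ₖ|h|| ≤ |∂ₖh|`. Young's inequality
`xy ≤ a x² + y²/(4a)` on both terms, with `a = η/9`, and the bound `w² ≤ |∇g|²` give the estimate
after summing over the 27 triples `(i, j, k)`.
-/

lemma mul_le_mul_sq_add_inv_mul_sq {a : ℝ} (ha : 0 < a) (x y : ℝ) :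
    x * y ≤ a * x ^ 2 + (4 * a)⁻¹ * y ^ 2 := by
  have hsq : 0 ≤ (4 * a)⁻¹ * (2 * a * x - y) ^ 2 := by positivity
  have hexp : (4 * a)⁻¹ * (2 * a * x - y) ^ 2 = a * x ^ 2 + (4 * a)⁻¹ * y ^ 2 - x * y := by
    field_simp
    ring
  linarith

section General

variable {E F : Type*} [NormedAddCommGroup E] [NormedSpace ℝ E]
  [NormedAddCommGroup F] [NormedSpace ℝ F]

-- Where `‖f ·‖` is not differentiable its derivative is the junk value `0`.
lemma abs_deriv_norm_comp_le {f : ℝ → F} {f' : F} {t : ℝ} (hf : HasDerivAt f f' t) :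
    |deriv (fun s => ‖f s‖) t| ≤ ‖f'‖ := by
  by_cases hd : DifferentiableAt ℝ (fun s => ‖f s‖) t
  · refine le_of_tendsto_of_tendsto hd.hasDerivAt.tendsto_slope_zero.norm
      hf.tendsto_slope_zero.norm (Filter.Eventually.of_forall fun s => ?_)
    simp only [norm_smul, Real.norm_eq_abs]
    exact mul_le_mul_of_nonneg_left (abs_norm_sub_norm_le _ _) (abs_nonneg _)
  · simp [deriv_zero_of_not_differentiableAt hd]

lemma abs_lineDeriv_norm_le {h : E → F} {x : E} (hh : DifferentiableAt ℝ h x) (v : E) :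
    |lineDeriv ℝ (fun y => ‖h y‖) x v| ≤ ‖fderiv ℝ h x v‖ :=
  abs_deriv_norm_comp_le (hh.hasFDerivAt.hasLineDerivAt v)

lemma ContDiff.fderiv_apply_const {m n : WithTop ℕ∞} {f : E → F} (hf : ContDiff ℝ m f)
    (hnm : n + 1 ≤ m) (v : E) : ContDiff ℝ n (fderiv ℝ f · v) :=
  (hf.fderiv_right hnm).clm_apply contDiff_const

def youngBound (a : ℝ) (w : E → ℝ) (h : E → F) (v x : E) : ℝ :=
  a * (fderiv ℝ (fderiv ℝ w · v) x v ^ 2 + ‖fderiv ℝ h x v‖ ^ 2)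
    + (4 * a)⁻¹ * (w x ^ 2 * (‖h x‖ ^ 2 + fderiv ℝ w x v ^ 2))

variable [MeasurableSpace E] [BorelSpace E] {μ : Measure E} {w φ : E → ℝ} {h : E → F}

section Integrable

variable [IsFiniteMeasureOnCompacts μ]

lemma integrable_lineDeriv_norm_mul (hh : ContDiff ℝ 1 h) (hφ : Continuous φ)
    (hφ_cs : HasCompactSupport φ) (v : E) :
    Integrable (fun x => lineDeriv ℝ (fun y => ‖h y‖) x v * φ x) μ := by
  have hh' : Continuous (fderiv ℝ h · v) :=
    (hh.continuous_fderiv one_ne_zero).clm_apply continuous_const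
  refine Integrable.mono' (g := fun x => ‖fderiv ℝ h x v‖ * |φ x|)
    ((by fun_prop : Continuous _).integrable_of_hasCompactSupport hφ_cs.abs.mul_left)
    ((aestronglyMeasurable_lineDeriv hh.continuous.norm μ).mul hφ.aestronglyMeasurable)
    (Filter.Eventually.of_forall fun x => ?_)
  rw [Real.norm_eq_abs, abs_mul]
  exact mul_le_mul_of_nonneg_right
    (abs_lineDeriv_norm_le ((hh.differentiable one_ne_zero) x) v) (abs_nonneg _)

lemma integrable_sq_fderiv_apply_mul (hw : ContDiff ℝ 1 w) (hw_cs : HasCompactSupport w)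
    {N : E → ℝ} (hN : Continuous N) (v : E) : Integrable (fun x => fderiv ℝ w x v ^ 2 * N x) μ := by
  have hu : Continuous (fderiv ℝ w · v) :=
    (hw.fderiv_apply_const (n := 0) (by norm_num) v).continuous
  refine (by fun_prop : Continuous _).integrable_of_hasCompactSupport ?_
  exact ((hw_cs.fderiv_apply ℝ v).comp_left (g := fun t : ℝ => t ^ 2) (by norm_num)).mul_right

lemma integrable_youngBound (hw : ContDiff ℝ 2 w) (hw_cs : HasCompactSupport w)
    (hh : ContDiff ℝ 1 h) (hh_cs : HasCompactSupport h) (a : ℝ) (v : E) :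
    Integrable (youngBound a w h v) μ := by
  have hu : ContDiff ℝ 1 (fderiv ℝ w · v) := hw.fderiv_apply_const (by norm_num) v
  have hu' : Continuous (fderiv ℝ (fderiv ℝ w · v) · v) :=
    (hu.fderiv_apply_const (n := 0) (by norm_num) v).continuous
  have hh' : Continuous (fderiv ℝ h · v) :=
    (hh.fderiv_apply_const (n := 0) (by norm_num) v).continuous
  have hw' := hw.continuous
  have hu'' := hu.continuous
  have hh'' := hh.continuous
  refine (by unfold youngBound; fun_prop : Continuous _).integrable_of_hasCompactSupport
    (.intro (hw_cs.union hh_cs) fun x hx => ?_)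
  rw [Set.mem_union, not_or] at hx
  have hu_x : x ∉ tsupport (fderiv ℝ w · v) :=
    fun hx' => hx.1 (tsupport_fderiv_apply_subset ℝ v hx')
  simp [youngBound, image_eq_zero_of_notMem_tsupport hx.1, image_eq_zero_of_notMem_tsupport hx.2,
    fderiv_of_notMem_tsupport ℝ hx.2, fderiv_of_notMem_tsupport ℝ hu_x]

end Integrable

variable [FiniteDimensional ℝ E] [μ.IsAddHaarMeasure]

lemma integral_lineDeriv_norm_mul_eq (hh : ContDiff ℝ 1 h) (hh_cs : HasCompactSupport h)
    (hφ : ContDiff ℝ 1 φ) (hφ_cs : HasCompactSupport φ) (v : E) :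
    ∫ x, lineDeriv ℝ (fun y => ‖h y‖) x v * φ x ∂μ = -∫ x, fderiv ℝ φ x v * ‖h x‖ ∂μ := by
  obtain ⟨C, hC⟩ := hh.lipschitzWith_of_hasCompactSupport hh_cs one_ne_zero
  obtain ⟨C', hC'⟩ := hφ.lipschitzWith_of_hasCompactSupport hφ_cs one_ne_zero
  have hN : LipschitzWith (1 * C) (fun y => ‖h y‖) := lipschitzWith_one_norm.comp hC
  rw [hN.integral_lineDeriv_mul_eq hC' hφ_cs, ← integral_neg]
  refine integral_congr_ae (Filter.Eventually.of_forall fun x => ?_)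
  simp [((hφ.differentiable one_ne_zero) x).lineDeriv_eq_fderiv]

theorem integral_sq_fderiv_apply_mul_norm_le (hw : ContDiff ℝ 2 w) (hw_cs : HasCompactSupport w)
    (hh : ContDiff ℝ 1 h) (hh_cs : HasCompactSupport h) (v : E) {a : ℝ} (ha : 0 < a) :
    ∫ x, fderiv ℝ w x v ^ 2 * ‖h x‖ ∂μ ≤ ∫ x, youngBound a w h v x ∂μ := by
  set u := (fderiv ℝ w · v)
  set u' := (fderiv ℝ u · v)
  set N := fun x => ‖h x‖
  have hw1 : ContDiff ℝ 1 w := hw.of_le (by norm_num)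
  have hu : ContDiff ℝ 1 u := hw.fderiv_apply_const (by norm_num) v
  have hu' : Continuous u' := (hu.fderiv_apply_const (n := 0) (by norm_num) v).continuous
  have hwu : ContDiff ℝ 1 (fun x => w x * u x) := hw1.mul hu
  have ibp : ∫ x, lineDeriv ℝ N x v * (w x * u x) ∂μ = -∫ x, (u x ^ 2 + w x * u' x) * N x ∂μ := by
    rw [integral_lineDeriv_norm_mul_eq hh hh_cs hwu hw_cs.mul_right]
    congr 2 with x
    rw [fderiv_fun_mul ((hw1.differentiable one_ne_zero) x) ((hu.differentiable one_ne_zero) x)]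
    simp only [add_apply, smul_apply, smul_eq_mul, u']
    ring
  have I1 : Integrable (fun x => u x ^ 2 * N x) μ :=
    integrable_sq_fderiv_apply_mul hw1 hw_cs hh.continuous.norm v
  have I2 : Integrable (fun x => w x * u' x * N x) μ :=
    (by fun_prop : Continuous _).integrable_of_hasCompactSupport hw_cs.mul_right.mul_right
  have I3 : Integrable (fun x => -(lineDeriv ℝ N x v * (w x * u x))) μ :=
    (integrable_lineDeriv_norm_mul hh hwu.continuous hw_cs.mul_right v).neg
  calc ∫ x, u x ^ 2 * N x ∂μ
      = ∫ x, (-(lineDeriv ℝ N x v * (w x * u x)) - w x * u' x * N x) ∂μ := by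
        rw [integral_sub I3 I2, integral_neg, ibp, neg_neg, eq_sub_iff_add_eq, ← integral_add I1 I2]
        congr 1 with x
        ring
    _ ≤ ∫ x, youngBound a w h v x ∂μ := by
        refine integral_mono (I3.sub I2) (integrable_youngBound hw hw_cs hh hh_cs a v)
          fun x => ?_
        have hD := abs_le.1 (abs_lineDeriv_norm_le ((hh.differentiable one_ne_zero) x) v)
        have hD2 : lineDeriv ℝ N x v ^ 2 ≤ ‖fderiv ℝ h x v‖ ^ 2 := sq_le_sq' hD.1 hD.2
        have y1 := mul_le_mul_sq_add_inv_mul_sq ha (-lineDeriv ℝ N x v) (w x * u x)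
        have y2 := mul_le_mul_sq_add_inv_mul_sq ha (-u' x) (w x * N x)
        simp only [youngBound]
        nlinarith

theorem integral_sum_sq_fderiv_apply_mul_norm_le {ι : Type*} (s : Finset ι) {w : ι → E → ℝ}
    (hw : ∀ i, ContDiff ℝ 2 (w i)) (hw_cs : ∀ i, HasCompactSupport (w i))
    (hh : ContDiff ℝ 1 h) (hh_cs : HasCompactSupport h) (v : ι → E) {a : ℝ} (ha : 0 < a) :
    ∫ x, ∑ i ∈ s, fderiv ℝ (w i) x (v i) ^ 2 * ‖h x‖ ∂μ
      ≤ ∫ x, ∑ i ∈ s, youngBound a (w i) h (v i) x ∂μ := by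
  rw [integral_finsetSum s fun i _ => integrable_sq_fderiv_apply_mul
      ((hw i).of_le (by norm_num)) (hw_cs i) hh.continuous.norm (v i),
    integral_finsetSum s fun i _ => integrable_youngBound (hw i) (hw_cs i) hh hh_cs a (v i)]
  exact Finset.sum_le_sum fun i _ =>
    integral_sq_fderiv_apply_mul_norm_le (hw i) (hw_cs i) hh hh_cs (v i) ha

end General

section Coordinates

variable {v : E3 → E3} {f : E3 → ℝ} {x : E3}

lemma ContDiff.component {n : WithTop ℕ∞} (hv : ContDiff ℝ n v) (i : Fin 3) :
    ContDiff ℝ n (fun y => v y i) :=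
  (EuclideanSpace.proj (𝕜 := ℝ) i).contDiff.comp hv

lemma HasCompactSupport.component (hv : HasCompactSupport v) (i : Fin 3) :
    HasCompactSupport (fun y => v y i) :=
  hv.comp_left (g := fun z : E3 => z i) rfl

lemma notMem_tsupport_component (hx : x ∉ tsupport v) (i : Fin 3) :
    x ∉ tsupport (fun y => v y i) :=
  fun hx' => hx (tsupport_comp_subset (g := fun z : E3 => z i) rfl v hx')

lemma notMem_tsupport_pder (hx : x ∉ tsupport f) (j : Fin 3) : x ∉ tsupport (pder j f) :=
  fun hx' => hx (tsupport_fderiv_apply_subset ℝ _ hx')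

lemma hasCompactSupport_grad2 (hv : HasCompactSupport v) : HasCompactSupport (grad2 v) :=
  .intro hv fun x hx => by
    simp [grad2, image_eq_zero_of_notMem_tsupport
      (notMem_tsupport_pder (notMem_tsupport_component hx _) _)]

lemma hasCompactSupport_third2 (hv : HasCompactSupport v) : HasCompactSupport (third2 v) :=
  .intro hv fun x hx => by
    simp [third2, image_eq_zero_of_notMem_tsupport (notMem_tsupport_pder (notMem_tsupport_pder
      (notMem_tsupport_pder (notMem_tsupport_component hx _) _) _) _)]

lemma continuous_grad2 (hv : ContDiff ℝ 1 v) : Continuous (grad2 v) :=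
  continuous_finsetSum _ fun i _ => continuous_finsetSum _ fun j _ =>
    (((hv.component i).fderiv_apply_const (n := 0) (by norm_num) _).continuous.pow 2)

lemma continuous_hess2 (hv : ContDiff ℝ 2 v) : Continuous (hess2 v) :=
  continuous_finsetSum _ fun i _ => continuous_finsetSum _ fun j _ =>
    continuous_finsetSum _ fun k _ =>
      ((((hv.component i).fderiv_apply_const (n := 1) (by norm_num) _).fderiv_apply_const
        (n := 0) (by norm_num) _).continuous.pow 2)

lemma continuous_third2 (hv : ContDiff ℝ 3 v) : Continuous (third2 v) :=
  continuous_finsetSum _ fun i _ => continuous_finsetSum _ fun j _ =>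
    continuous_finsetSum _ fun k _ => continuous_finsetSum _ fun l _ =>
      (((((hv.component i).fderiv_apply_const (n := 2) (by norm_num) _).fderiv_apply_const
        (n := 1) (by norm_num) _).fderiv_apply_const (n := 0) (by norm_num) _).continuous.pow 2)

lemma grad2_nonneg (v : E3 → E3) (x : E3) : 0 ≤ grad2 v x := by unfold grad2; positivity

lemma hess2_nonneg (v : E3 → E3) (x : E3) : 0 ≤ hess2 v x := by unfold hess2; positivity

lemma third2_nonneg (v : E3 → E3) (x : E3) : 0 ≤ third2 v x := by unfold third2; positivity

lemma hess2_mul_eq_sum (g : E3 → E3) (N : ℝ) (x : E3) :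
    hess2 g x * N = ∑ p : Fin 3 × Fin 3 × Fin 3,
      fderiv ℝ (pder p.2.1 (fun y => g y p.1)) x (EuclideanSpace.single p.2.2 1) ^ 2 * N := by
  simp only [hess2, Finset.sum_mul, Fintype.sum_prod_type]
  rfl

lemma sq_norm_fderiv_apply_single (hv : DifferentiableAt ℝ v x) (k : Fin 3) :
    ‖fderiv ℝ v x (EuclideanSpace.single k 1)‖ ^ 2
      = ∑ m : Fin 3, pder k (fun y => v y m) x ^ 2 := by
  rw [EuclideanSpace.norm_sq_eq]
  congr 1 with m
  have hvm : HasFDerivAt (fun y => v y m) ((EuclideanSpace.proj m).comp (fderiv ℝ v x)) x :=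
    (EuclideanSpace.proj (𝕜 := ℝ) m).hasFDerivAt.comp x hv.hasFDerivAt
  rw [Real.norm_eq_abs, sq_abs, pder, hvm.fderiv]
  rfl

lemma sq_pder_le_grad2 (v : E3 → E3) (x : E3) (i j : Fin 3) :
    pder j (fun y => v y i) x ^ 2 ≤ grad2 v x :=
  (Finset.single_le_sum (f := fun j => pder j (fun y => v y i) x ^ 2)
      (fun _ _ => sq_nonneg _) (Finset.mem_univ j)).trans
    (Finset.single_le_sum (f := fun i => ∑ j : Fin 3, pder j (fun y => v y i) x ^ 2)
      (fun _ _ => Finset.sum_nonneg fun _ _ => sq_nonneg _) (Finset.mem_univ i))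

lemma sum_sq_pder_pder_diag_le_third2 (v : E3 → E3) (x : E3) :
    ∑ i : Fin 3, ∑ j : Fin 3, ∑ k : Fin 3, pder k (pder k (pder j (fun y => v y i))) x ^ 2
      ≤ third2 v x :=
  Finset.sum_le_sum fun i _ => Finset.sum_le_sum fun j _ => Finset.sum_le_sum fun k _ =>
    Finset.single_le_sum (f := fun l => pder l (pder k (pder j (fun y => v y i))) x ^ 2)
      (fun _ _ => sq_nonneg _) (Finset.mem_univ k)

lemma youngBound_pder (a : ℝ) (f : E3 → ℝ) (h : E3 → E3) (j k : Fin 3) (x : E3) :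
    youngBound a (pder j f) h (EuclideanSpace.single k 1) x =
      a * (pder k (pder k (pder j f)) x ^ 2 + ‖fderiv ℝ h x (EuclideanSpace.single k 1)‖ ^ 2)
        + (4 * a)⁻¹ * (pder j f x ^ 2 * (‖h x‖ ^ 2 + pder k (pder j f) x ^ 2)) :=
  rfl

lemma sum_youngBound_le (g : E3 → E3) {h : E3 → E3} (hh : DifferentiableAt ℝ h x)
    {a : ℝ} (ha : 0 ≤ a) :
    ∑ p : Fin 3 × Fin 3 × Fin 3,
        youngBound a (pder p.2.1 (fun y => g y p.1)) h (EuclideanSpace.single p.2.2 1) x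
      ≤ 9 * a * (third2 g x + grad2 h x)
        + 27 * (4 * a)⁻¹ * (grad2 g x * (‖h x‖ ^ 2 + hess2 g x)) := by
  have hb : 0 ≤ (4 * a)⁻¹ := by positivity
  have hgrad_h : ∑ k : Fin 3, ‖fderiv ℝ h x (EuclideanSpace.single k 1)‖ ^ 2 = grad2 h x := by
    simp only [sq_norm_fderiv_apply_single hh, grad2]
    exact Finset.sum_comm
  calc _ ≤ ∑ i : Fin 3, ∑ j : Fin 3, ∑ k : Fin 3,
          (a * (pder k (pder k (pder j (fun y => g y i))) x ^ 2
              + ‖fderiv ℝ h x (EuclideanSpace.single k 1)‖ ^ 2)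
            + (4 * a)⁻¹ * (grad2 g x * (‖h x‖ ^ 2 + pder k (pder j (fun y => g y i)) x ^ 2))) := by
        simp only [Fintype.sum_prod_type, youngBound_pder]
        gcongr with i _ j _ k _
        exact sq_pder_le_grad2 g x i j
    _ = a * ∑ i : Fin 3, ∑ j : Fin 3, ∑ k : Fin 3, pder k (pder k (pder j (fun y => g y i))) x ^ 2
          + 9 * a * grad2 h x + 27 * (4 * a)⁻¹ * grad2 g x * ‖h x‖ ^ 2
          + (4 * a)⁻¹ * grad2 g x * hess2 g x := by
        simp only [Finset.sum_add_distrib, ← Finset.mul_sum, mul_add, Finset.sum_const,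
          Finset.card_univ, Fintype.card_fin, hess2, hgrad_h]
        ring
    _ ≤ _ := by
        nlinarith [mul_le_mul_of_nonneg_left (sum_sq_pder_pder_diag_le_third2 g x) ha,
          mul_nonneg ha (third2_nonneg g x), mul_nonneg ha (grad2_nonneg h x),
          mul_nonneg hb (mul_nonneg (grad2_nonneg g x) (hess2_nonneg g x))]

end Coordinates

/-- inequality (2.14): for every η > 0 there is a constant C depending
only on η such that for every C³ compactly supported g : ℝ³ → ℝ³ and every C¹
compactly supported h : ℝ³ → ℝ³,
∫ |∇²g|² |h| ≤ η ∫ (|∇³g|² + |∇h|²) + C ∫ |∇g|² (|h|² + |∇²g|²). -/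
theorem hess_sq_times_h_bound :
    ∀ η : ℝ, 0 < η → ∃ C : ℝ,
      ∀ g : E3 → E3, ContDiff ℝ 3 g → HasCompactSupport g →
      ∀ h : E3 → E3, ContDiff ℝ 1 h → HasCompactSupport h →
        ∫ x, hess2 g x * ‖h x‖ ≤
          η * (∫ x, (third2 g x + grad2 h x))
            + C * ∫ x, grad2 g x * (‖h x‖ ^ 2 + hess2 g x) := by
  intro η hη
  have ha : 0 < η / 9 := by positivity
  refine ⟨27 * (4 * (η / 9))⁻¹, fun g hg hg_cs h hh hh_cs => ?_⟩
  have hw (p : Fin 3 × Fin 3 × Fin 3) : ContDiff ℝ 2 (pder p.2.1 (fun y => g y p.1)) :=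
    (hg.component p.1).fderiv_apply_const (n := 2) (by norm_num) _
  have hw_cs (p : Fin 3 × Fin 3 × Fin 3) : HasCompactSupport (pder p.2.1 (fun y => g y p.1)) :=
    (hg_cs.component p.1).fderiv_apply ℝ _
  have hX : Integrable (fun x => third2 g x + grad2 h x) :=
    ((continuous_third2 hg).integrable_of_hasCompactSupport (hasCompactSupport_third2 hg_cs)).add
      ((continuous_grad2 hh).integrable_of_hasCompactSupport (hasCompactSupport_grad2 hh_cs))
  have hY : Integrable (fun x => grad2 g x * (‖h x‖ ^ 2 + hess2 g x)) :=
    ((continuous_grad2 (hg.of_le (by norm_num))).mul ((hh.continuous.norm.pow 2).add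
      (continuous_hess2 (hg.of_le (by norm_num))))).integrable_of_hasCompactSupport
      (hasCompactSupport_grad2 hg_cs).mul_right
  have h9 : 9 * (η / 9) = η := by ring
  calc ∫ x, hess2 g x * ‖h x‖
      = ∫ x, ∑ p : Fin 3 × Fin 3 × Fin 3,
          fderiv ℝ (pder p.2.1 (fun y => g y p.1)) x (EuclideanSpace.single p.2.2 1) ^ 2
            * ‖h x‖ := by
        simp only [hess2_mul_eq_sum]
    _ ≤ ∫ x, ∑ p : Fin 3 × Fin 3 × Fin 3,
          youngBound (η / 9) (pder p.2.1 (fun y => g y p.1)) h (EuclideanSpace.single p.2.2 1) x :=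
        integral_sum_sq_fderiv_apply_mul_norm_le _ hw hw_cs hh hh_cs _ ha
    _ ≤ ∫ x, (η * (third2 g x + grad2 h x)
          + 27 * (4 * (η / 9))⁻¹ * (grad2 g x * (‖h x‖ ^ 2 + hess2 g x))) :=
        integral_mono (integrable_finsetSum _ fun p _ =>
            integrable_youngBound (hw p) (hw_cs p) hh hh_cs _ _)
          ((hX.const_mul η).add (hY.const_mul _)) fun x => by
          simpa only [h9] using sum_youngBound_le g ((hh.differentiable one_ne_zero) x) ha.le
    _ = _ := by
        rw [integral_add (hX.const_mul η) (hY.const_mul _), integral_const_mul,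
          integral_const_mul]
end
end
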